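/- Let N ≥ 1, let u ∈ ℝ^N be a nonzero vector, let F : ℝ^N_{++} → ℝ^N_{++} be continuously differentiable, assume F scales with exponent u and F connects all variables, and set G := clog ∘ F ∘ cexp. Then the following assertions are equivalent: (i) for each z ∈ ℝ^N the matrix |DG(z)| has spectral radius 1; (ii) for each z ∈ ℝ^N one has |DG(z)| |u| = |u|; (iii) for each z ∈ ℝ^N there exists a nonzero entrywise nonnegative vector v ∈ ℝ^N with |DG(z)| v = v; (iv) the monotonicity behavior of F is consistent with u. Moreover, if one (hence all) of these assertions holds, then every entry of u is nonzero. -/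

import Mathlib

open Filter

/-- The positive orthant `ℝ^N_{++}`: vectors all of whose entries are strictly positive. -/
def PosOrth (N : ℕ) : Set (Fin N → ℝ) := {x | ∀ i, 0 < x i}

/-- The Jacobian matrix of `F` at `x`: entry `(j, k)` is `∂F_j(x)/∂x_k`. -/
noncomputable def Jac {N : ℕ} (F : (Fin N → ℝ) → (Fin N → ℝ)) (x : Fin N → ℝ) :
    Matrix (Fin N) (Fin N) ℝ :=
  Matrix.of fun j k => fderiv ℝ F x (Pi.single k 1) j

/-- A matrix is irreducible if the directed graph on `Fin N` with an edge from `k` to `j`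
whenever `M j k ≠ 0` is strongly connected. -/
def MatIrred {N : ℕ} (M : Matrix (Fin N) (Fin N) ℝ) : Prop :=
  ∀ a b : Fin N, Relation.TransGen (fun k j => M j k ≠ 0) a b

/-- `pscale c u x = c^u x`, i.e. the vector with entries `c ^ (u i) * x i`. -/
noncomputable def pscale {N : ℕ} (c : ℝ) (u x : Fin N → ℝ) : Fin N → ℝ :=
  fun i => c ^ u i * x i

/-- The monotonicity behavior of `F` is consistent with `u`: there is a partition of the
index set into `ζ_+` (where `ζ = true`) and `ζ_-` (where `ζ = false`) such that `u` is
nonnegative on `ζ_+`, nonpositive on `ζ_-`, and on the positive orthant all partial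
derivatives `∂F_j/∂x_k` are nonnegative when `j, k` lie in the same set of the partition
and nonpositive otherwise. -/
def MonoConsistent {N : ℕ} (F : (Fin N → ℝ) → (Fin N → ℝ)) (u : Fin N → ℝ) : Prop :=
  ∃ ζ : Fin N → Bool,
    (∀ j, ζ j = true → 0 ≤ u j) ∧ (∀ j, ζ j = false → u j ≤ 0) ∧
    ∀ x ∈ PosOrth N, ∀ j k : Fin N,
      (ζ j = ζ k → 0 ≤ Jac F x j k) ∧ (ζ j ≠ ζ k → Jac F x j k ≤ 0)

/-- Componentwise natural logarithm `ℝ^N_{++} → ℝ^N`. -/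
noncomputable def clog {N : ℕ} (x : Fin N → ℝ) : Fin N → ℝ := fun i => Real.log (x i)

/-- Componentwise exponential `ℝ^N → ℝ^N_{++}`. -/
noncomputable def cexp {N : ℕ} (z : Fin N → ℝ) : Fin N → ℝ := fun i => Real.exp (z i)

/-- The spectral radius of a real matrix: the maximum of the absolute values of its
complex eigenvalues. -/
noncomputable def specRad {N : ℕ} (M : Matrix (Fin N) (Fin N) ℝ) : ℝ :=
  sSup ((fun z : ℂ => ‖z‖) '' spectrum ℂ (M.map Complex.ofReal))

/-!
In log coordinates the scaling law reads `G (z + t • u) = G z + t • u`, so `DG(z) u = u`; and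
`DG(z)` is `DF(cexp z)` with rows and columns rescaled by positive numbers, so it has the sign
pattern and the (irreducible) zero pattern of `DF`. By the triangle inequality
`|DG(z)| |u| ≥ |u|`, with equality exactly when every term `u_j DG(z)_jk u_k` is nonnegative, i.e.
when the signs of `DF` are those prescribed by the signs of `u`; irreducibility then makes every
`u_j` nonzero.

For a nonnegative irreducible `A`, a nonnegative fixed vector is positive, and comparing an
eigenvector with it bounds every eigenvalue by `1`, so `ρ(A) = 1`. Conversely, if `A w ≥ w` but
`A w ≠ w`, multiplying by a positive matrix commuting with `A` yields `w' > 0` with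
`A w' ≥ (1 + δ) w'`, and Gelfand's formula gives `ρ(A) ≥ 1 + δ`.
-/

open Matrix Topology

namespace Matrix

variable {ι : Type*} [Fintype ι]

section Nonneg

variable {A : Matrix ι ι ℝ} {v w : ι → ℝ}

lemma abs_mulVec_le (J : Matrix ι ι ℝ) (v : ι → ℝ) (i : ι) :
    |(J *ᵥ v) i| ≤ (J.map abs *ᵥ fun k => |v k|) i :=
  (Finset.abs_sum_le_sum_abs _ _).trans_eq (by simp only [abs_mul]; rfl)

lemma mulVec_mono (hA : ∀ i j, 0 ≤ A i j) (hvw : v ≤ w) : A *ᵥ v ≤ A *ᵥ w := fun i =>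
  Finset.sum_le_sum fun j _ => mul_le_mul_of_nonneg_left (hvw j) (hA i j)

lemma mulVec_pos_of_pos {P : Matrix ι ι ℝ} (hP : ∀ i j, 0 < P i j) (hv : 0 ≤ v) (hv0 : v ≠ 0)
    (i : ι) : 0 < (P *ᵥ v) i := by
  obtain ⟨j, hj⟩ := Function.ne_iff.1 hv0
  exact Finset.sum_pos' (fun k _ => mul_nonneg (hP i k).le (hv k))
    ⟨j, Finset.mem_univ j, mul_pos (hP i j) ((hv j).lt_of_ne' hj)⟩

lemma map_ofReal_mulVec (A : Matrix ι ι ℝ) (v : ι → ℝ) :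
    A.map Complex.ofReal *ᵥ (fun i => (v i : ℂ)) = fun i => ((A *ᵥ v) i : ℂ) := by
  funext i
  simp [mulVec, dotProduct]

variable [DecidableEq ι]

lemma pow_mulVec_le_self (hA : ∀ i j, 0 ≤ A i j) (hAv : A *ᵥ v ≤ v) (n : ℕ) :
    A ^ n *ᵥ v ≤ v := by
  induction n with
  | zero => rw [pow_zero, one_mulVec]
  | succ n ih =>
    rw [pow_succ, ← mulVec_mulVec]
    exact (mulVec_mono (pow_apply_nonneg hA n) hAv).trans ih

lemma exists_pow_apply_pos_of_transGen (hA : ∀ i j, 0 ≤ A i j) {a b : ι}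
    (hab : Relation.TransGen (fun k j => A j k ≠ 0) a b) : ∃ ℓ > 0, 0 < (A ^ ℓ) b a := by
  induction hab with
  | single hba => exact ⟨1, one_pos, by rw [pow_one]; exact (hA _ _).lt_of_ne' hba⟩
  | tail _ hcb ih =>
    obtain ⟨ℓ, -, hℓ⟩ := ih
    refine ⟨ℓ + 1, ℓ.succ_pos, ?_⟩
    rw [pow_succ', mul_apply]
    exact Finset.sum_pos' (fun k _ => mul_nonneg (hA _ _) (pow_apply_nonneg hA ℓ _ _))
      ⟨_, Finset.mem_univ _, mul_pos ((hA _ _).lt_of_ne' hcb) hℓ⟩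

namespace IsIrreducible

lemma pos_of_mulVec_le_self (hA : A.IsIrreducible) (hv : 0 ≤ v) (hv0 : v ≠ 0)
    (hAv : A *ᵥ v ≤ v) (i : ι) : 0 < v i := by
  obtain ⟨j, hj⟩ := Function.ne_iff.1 hv0
  obtain ⟨k, -, hk⟩ := (isIrreducible_iff_exists_pow_pos hA.nonneg).1 hA i j
  calc 0 < (A ^ k) i j * v j := mul_pos hk ((hv j).lt_of_ne' hj)
    _ ≤ (A ^ k *ᵥ v) i := Finset.single_le_sum
        (fun l _ => mul_nonneg (pow_apply_nonneg hA.nonneg k i l) (hv l)) (Finset.mem_univ j)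
    _ ≤ v i := pow_mulVec_le_self hA.nonneg hAv k i

lemma exists_pos_commute (hA : A.IsIrreducible) :
    ∃ P : Matrix ι ι ℝ, (∀ i j, 0 < P i j) ∧ Commute A P := by
  choose ℓ _ hℓ using (isIrreducible_iff_exists_pow_pos hA.nonneg).1 hA
  refine ⟨∑ p : ι × ι, A ^ ℓ p.1 p.2, fun i j => ?_,
    Commute.sum_right _ _ _ fun p _ => Commute.self_pow A _⟩
  rw [sum_apply]
  exact (hℓ i j).trans_le <| Finset.single_le_sum (f := fun p : ι × ι => (A ^ ℓ p.1 p.2) i j)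
    (fun p _ => pow_apply_nonneg hA.nonneg _ i j) (Finset.mem_univ (i, j))

end IsIrreducible

lemma mem_spectrum_iff_exists_mulVec_eq_smul {K : Type*} [Field K] (B : Matrix ι ι K) (μ : K) :
    μ ∈ spectrum K B ↔ ∃ x ≠ 0, B *ᵥ x = μ • x := by
  rw [← spectrum_toLin', ← Module.End.hasEigenvalue_iff_mem_spectrum]
  constructor
  · intro h
    obtain ⟨x, hx, hx0⟩ := h.exists_hasEigenvector
    exact ⟨x, hx0, by simpa using Module.End.mem_eigenspace_iff.1 hx⟩
  · rintro ⟨x, hx0, hx⟩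
    exact Module.End.hasEigenvalue_of_hasEigenvector
      ⟨Module.End.mem_eigenspace_iff.2 (by simpa using hx), hx0⟩

lemma norm_le_of_mulVec_le_smul (hA : ∀ i j, 0 ≤ A i j) (hv : ∀ i, 0 < v i) {r : ℝ}
    (hAv : A *ᵥ v ≤ r • v) {μ : ℂ} (hμ : μ ∈ spectrum ℂ (A.map Complex.ofReal)) : ‖μ‖ ≤ r := by
  obtain ⟨x, hx0, hx⟩ := (mem_spectrum_iff_exists_mulVec_eq_smul _ μ).1 hμ
  obtain ⟨k, hk⟩ := Function.ne_iff.1 hx0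
  -- compare the eigenvector `x` with `v` at an index where `‖x j‖ / v j` is maximal
  obtain ⟨j, -, hj⟩ :=
    Finset.exists_max_image Finset.univ (fun k => ‖x k‖ / v k) ⟨k, Finset.mem_univ k⟩
  set c := ‖x j‖ / v j
  have hxc : ∀ k, ‖x k‖ ≤ c * v k := fun k => (div_le_iff₀ (hv k)).1 (hj k (Finset.mem_univ k))
  have hc : 0 < c := (div_pos (norm_pos_iff.2 hk) (hv k)).trans_le (hj k (Finset.mem_univ k))
  have hxj : ‖x j‖ = c * v j := (div_mul_cancel₀ _ (hv j).ne').symm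
  have key : ‖μ‖ * ‖x j‖ ≤ r * ‖x j‖ :=
    calc ‖μ‖ * ‖x j‖ = ‖(A.map Complex.ofReal *ᵥ x) j‖ := by
          rw [hx, Pi.smul_apply, smul_eq_mul, norm_mul]
      _ ≤ ∑ k, A j k * ‖x k‖ := (norm_sum_le _ _).trans_eq <| Finset.sum_congr rfl fun k _ => by
          simp only [map_apply, norm_mul, Complex.norm_real, Real.norm_of_nonneg (hA j k)]
      _ ≤ ∑ k, A j k * (c * v k) :=
          Finset.sum_le_sum fun k _ => mul_le_mul_of_nonneg_left (hxc k) (hA j k)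
      _ = c * (A *ᵥ v) j := by
          rw [mulVec, dotProduct, Finset.mul_sum]
          exact Finset.sum_congr rfl fun k _ => by ring
      _ ≤ c * (r * v j) := mul_le_mul_of_nonneg_left (hAv j) hc.le
      _ = r * ‖x j‖ := by rw [hxj]; ring
  exact le_of_mul_le_mul_right key (hxj ▸ mul_pos hc (hv j))

end Nonneg

section Sign

variable {J : Matrix ι ι ℝ} {u : ι → ℝ}

lemma map_abs_mulVec_abs_eq_of_sign (hJu : J *ᵥ u = u) {σ : ι → ℝ} (hσ : ∀ j, |σ j| = 1)
    (hσu : ∀ j, 0 ≤ σ j * u j) (hσJ : ∀ j k, 0 ≤ σ j * J j k * σ k) :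
    J.map abs *ᵥ (fun i => |u i|) = fun i => |u i| := by
  have habs : ∀ j, |u j| = σ j * u j := fun j => by
    rw [← abs_of_nonneg (hσu j), abs_mul, hσ j, one_mul]
  have hJabs : ∀ j k, |J j k| = σ j * J j k * σ k := fun j k => by
    rw [← abs_of_nonneg (hσJ j k), abs_mul, abs_mul, hσ j, hσ k, one_mul, mul_one]
  have hsq : ∀ k, σ k * σ k = 1 := fun k => by rw [← abs_mul_abs_self, hσ k, one_mul]
  funext j
  calc ∑ k, |J j k| * |u k| = ∑ k, σ j * (J j k * u k) := Finset.sum_congr rfl fun k _ => by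
        rw [hJabs, habs]
        linear_combination (σ j * J j k * u k) * hsq k
    _ = |u j| := by rw [← Finset.mul_sum, habs]; exact congrArg _ (congrFun hJu j)

lemma mul_mul_nonneg_of_map_abs_mulVec_abs_eq (hJu : J *ᵥ u = u)
    (h : J.map abs *ᵥ (fun i => |u i|) = fun i => |u i|) (j k : ι) : 0 ≤ u j * J j k * u k := by
  -- equality in the triangle inequality `|∑ k, J j k * u k| ≤ ∑ k, |J j k * u k|`
  have hterm : ∀ k, 0 ≤ |u j| * |J j k * u k| - u j * (J j k * u k) := fun k =>
    sub_nonneg.2 ((le_abs_self _).trans_eq (abs_mul _ _))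
  have hsum : ∑ k, (|u j| * |J j k * u k| - u j * (J j k * u k)) = 0 := by
    have h1 : ∑ k, |J j k| * |u k| = |u j| := congrFun h j
    have h2 : ∑ k, J j k * u k = u j := congrFun hJu j
    simp_rw [Finset.sum_sub_distrib, ← Finset.mul_sum, abs_mul, h1, h2, abs_mul_abs_self, sub_self]
  have := (Finset.sum_eq_zero_iff_of_nonneg fun k _ => hterm k).1 hsum k (Finset.mem_univ k)
  nlinarith [abs_nonneg (u j), abs_nonneg (J j k * u k)]

end Sign

end Matrix

lemma ofReal_le_spectralRadius_of_pow_le_norm_pow {𝒜 : Type*} [NormedRing 𝒜] [NormedAlgebra ℂ 𝒜]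
    [CompleteSpace 𝒜] {a : 𝒜} {t : ℝ} (ht : 0 ≤ t) (h : ∀ n : ℕ, t ^ n ≤ ‖a ^ n‖) :
    ENNReal.ofReal t ≤ spectralRadius ℂ a := by
  refine ge_of_tendsto (spectrum.pow_norm_pow_one_div_tendsto_nhds_spectralRadius a) ?_
  filter_upwards [eventually_ne_atTop 0] with n hn
  refine ENNReal.ofReal_le_ofReal ?_
  calc t = (t ^ n) ^ (1 / n : ℝ) := by rw [one_div, Real.pow_rpow_inv_natCast ht hn]
    _ ≤ ‖a ^ n‖ ^ (1 / n : ℝ) := Real.rpow_le_rpow (by positivity) (h n) (by positivity)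

lemma Pi.exists_pos_smul_le {ι : Type*} [Finite ι] (x : ι → ℝ) {y : ι → ℝ} (hy : ∀ i, 0 < y i) :
    ∃ δ > (0 : ℝ), δ • x ≤ y := by
  have h : ∀ᶠ δ in 𝓝[>] (0 : ℝ), ∀ i, δ * x i < y i := eventually_all.2 fun i =>
    ((tendsto_id.mul_const (x i)).mono_left nhdsWithin_le_nhds).eventually
      (gt_mem_nhds (by simpa using hy i))
  obtain ⟨δ, hδ, hδpos⟩ := (h.and eventually_mem_nhdsWithin).exists
  exact ⟨δ, hδpos, fun i => (hδ i).le⟩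

section LinftyOpNorm

attribute [local instance] Matrix.linftyOpNormedAddCommGroup Matrix.linftyOpNormedRing
  Matrix.linftyOpNormedAlgebra

namespace Matrix

variable {ι : Type*} [Fintype ι] [DecidableEq ι]

lemma ofReal_le_spectralRadius_of_smul_le_mulVec {A : Matrix ι ι ℝ} (hA : ∀ i j, 0 ≤ A i j)
    {w : ι → ℝ} (hw : 0 ≤ w) (hw0 : w ≠ 0) {t : ℝ} (ht : 0 ≤ t) (htw : t • w ≤ A *ᵥ w) :
    ENNReal.ofReal t ≤ spectralRadius ℂ (A.map Complex.ofReal) := by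
  have hiter : ∀ n : ℕ, t ^ n • w ≤ A ^ n *ᵥ w := fun n => by
    induction n with
    | zero => simp
    | succ n ih =>
      calc t ^ (n + 1) • w = t ^ n • (t • w) := by rw [pow_succ, mul_smul]
        _ ≤ t ^ n • (A *ᵥ w) := smul_le_smul_of_nonneg_left htw (pow_nonneg ht n)
        _ = A *ᵥ (t ^ n • w) := (mulVec_smul A (t ^ n) w).symm
        _ ≤ A *ᵥ (A ^ n *ᵥ w) := mulVec_mono hA ih
        _ = A ^ (n + 1) *ᵥ w := by rw [mulVec_mulVec, pow_succ']
  have hnorm : ∀ y : ι → ℝ, ‖fun i => (y i : ℂ)‖ = ‖y‖ := fun y => by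
    simp [Pi.norm_def, Complex.nnnorm_real]
  refine ofReal_le_spectralRadius_of_pow_le_norm_pow ht fun n => ?_
  have hpow : (A.map Complex.ofReal) ^ n = (A ^ n).map Complex.ofReal :=
    (Matrix.map_pow A Complex.ofRealHom n).symm
  refine le_of_mul_le_mul_right ?_ (norm_pos_iff.2 hw0)
  calc t ^ n * ‖w‖ = ‖t ^ n • w‖ := by rw [norm_smul, Real.norm_of_nonneg (pow_nonneg ht n)]
    _ ≤ ‖A ^ n *ᵥ w‖ := (pi_norm_le_iff_of_nonneg (norm_nonneg _)).2 fun i => by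
        have hi : 0 ≤ (t ^ n • w) i := smul_nonneg (pow_nonneg ht n) (hw i)
        rw [Real.norm_of_nonneg hi]
        exact (hiter n i).trans ((Real.le_norm_self _).trans (norm_le_pi_norm _ i))
    _ = ‖(A.map Complex.ofReal) ^ n *ᵥ (fun i => (w i : ℂ))‖ := by
        rw [hpow, map_ofReal_mulVec, hnorm]
    _ ≤ ‖(A.map Complex.ofReal) ^ n‖ * ‖w‖ := by
        rw [← hnorm w]; exact linfty_opNorm_mulVec _ _

end Matrix

lemma ofReal_specRad {N : ℕ} (A : Matrix (Fin N) (Fin N) ℝ) :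
    ENNReal.ofReal (specRad A) = spectralRadius ℂ (A.map Complex.ofReal) := by
  rcases (spectrum ℂ (A.map Complex.ofReal)).eq_empty_or_nonempty with h | h
  · simp [specRad, spectralRadius, h]
  · obtain ⟨μ, hμ, hμρ⟩ := spectrum.exists_nnnorm_eq_spectralRadius_of_nonempty h
    have hmax : IsGreatest ((fun z : ℂ => ‖z‖) '' spectrum ℂ (A.map Complex.ofReal)) ‖μ‖ := by
      refine ⟨⟨μ, hμ, rfl⟩, ?_⟩
      rintro _ ⟨ν, hν, rfl⟩
      have := le_iSup₂ (f := fun k (_ : k ∈ spectrum ℂ (A.map Complex.ofReal)) =>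
        (‖k‖₊ : ENNReal)) ν hν
      rw [← spectralRadius, ← hμρ] at this
      exact_mod_cast this
    rw [specRad, hmax.csSup_eq, ← hμρ, ofReal_norm]
    rfl

end LinftyOpNorm

namespace Matrix.IsIrreducible

variable {N : ℕ} {A : Matrix (Fin N) (Fin N) ℝ}

lemma specRad_eq_one (hA : A.IsIrreducible) {v : Fin N → ℝ} (hv : 0 ≤ v) (hv0 : v ≠ 0)
    (hAv : A *ᵥ v = v) : specRad A = 1 := by
  have hpos := hA.pos_of_mulVec_le_self hv hv0 hAv.le
  refine IsGreatest.csSup_eq ⟨⟨1, ?_, norm_one⟩, ?_⟩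
  · refine (mem_spectrum_iff_exists_mulVec_eq_smul _ _).2 ⟨fun i => v i, ?_, ?_⟩
    · exact fun h => hv0 (funext fun i => by simpa using congrFun h i)
    · rw [map_ofReal_mulVec, hAv, one_smul]
  · rintro _ ⟨μ, hμ, rfl⟩
    exact norm_le_of_mulVec_le_smul hA.nonneg hpos (by rw [hAv, one_smul]) hμ

lemma mulVec_eq_self_of_le_mulVec (hA : A.IsIrreducible) (hρ : specRad A ≤ 1) {w : Fin N → ℝ}
    (hw : 0 ≤ w) (hwA : w ≤ A *ᵥ w) : A *ᵥ w = w := by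
  by_contra hne
  have hw0 : w ≠ 0 := by rintro rfl; simp at hne
  obtain ⟨j, -⟩ := Function.ne_iff.1 hw0
  obtain ⟨P, hP, hAP⟩ := hA.exists_pos_commute
  set d := A *ᵥ w - w
  -- `P *ᵥ w` satisfies `A *ᵥ (P *ᵥ w) ≥ (1 + δ) • P *ᵥ w` for some `δ > 0`
  have hAPw : A *ᵥ (P *ᵥ w) = P *ᵥ w + P *ᵥ d := by
    rw [mulVec_mulVec, hAP.eq, ← mulVec_mulVec, ← mulVec_add, add_sub_cancel]
  obtain ⟨δ, hδ, hδle⟩ := Pi.exists_pos_smul_le (P *ᵥ w)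
    (mulVec_pos_of_pos hP (sub_nonneg.2 hwA) (sub_ne_zero.2 hne))
  have hρ' := ofReal_le_spectralRadius_of_smul_le_mulVec hA.nonneg
    (fun i => (mulVec_pos_of_pos hP hw hw0 i).le)
    (fun h => (mulVec_pos_of_pos hP hw hw0 j).ne' (congrFun h j)) (by linarith : 0 ≤ 1 + δ)
    (by rw [hAPw, add_smul, one_smul]; exact add_le_add_right hδle _)
  rw [← ofReal_specRad] at hρ'
  have := (ENNReal.ofReal_le_ofReal_iff zero_le_one).1 (hρ'.trans (ENNReal.ofReal_le_ofReal hρ))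
  linarith

end Matrix.IsIrreducible

lemma MatIrred.isIrreducible {N : ℕ} {A : Matrix (Fin N) (Fin N) ℝ} (hA : ∀ i j, 0 ≤ A i j)
    (h : MatIrred A) : A.IsIrreducible :=
  (Matrix.isIrreducible_iff_exists_pow_pos hA).2 fun i j =>
    Matrix.exists_pow_apply_pos_of_transGen hA (h j i)

lemma HasFDerivAt.apply_eq_of_forall_add_smul {E F : Type*} [NormedAddCommGroup E]
    [NormedSpace ℝ E] [NormedAddCommGroup F] [NormedSpace ℝ F] {f : E → F} {f' : E →L[ℝ] F}
    {x v : E} {w : F} (hf : HasFDerivAt f f' x) (h : ∀ t : ℝ, f (x + t • v) = f x + t • w) :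
    f' v = w := by
  have hline : HasDerivAt (fun t : ℝ => x + t • v) v 0 := by
    simpa using ((hasDerivAt_id (0 : ℝ)).smul_const v).const_add x
  have h1 : HasDerivAt (fun t : ℝ => f (x + t • v)) (f' v) 0 :=
    (by simpa using hf : HasFDerivAt f f' (x + (0 : ℝ) • v)).comp_hasDerivAt 0 hline
  have h2 : HasDerivAt (fun t : ℝ => f (x + t • v)) w 0 := by
    simp_rw [h]
    simpa using ((hasDerivAt_id (0 : ℝ)).smul_const w).const_add (f x)
  exact h1.unique h2

section LogCoordinates

variable {N : ℕ}

lemma isOpen_posOrth (N : ℕ) : IsOpen (PosOrth N) := by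
  simp only [PosOrth, Set.ofPred_forall]
  exact isOpen_iInter_of_finite fun i => isOpen_lt continuous_const (continuous_apply i)

lemma cexp_mem_posOrth (z : Fin N → ℝ) : cexp z ∈ PosOrth N := fun _ => Real.exp_pos _

lemma cexp_clog {x : Fin N → ℝ} (hx : x ∈ PosOrth N) : cexp (clog x) = x :=
  funext fun i => Real.exp_log (hx i)

lemma cexp_add_smul (z u : Fin N → ℝ) (t : ℝ) :
    cexp (z + t • u) = pscale (Real.exp t) u (cexp z) :=
  funext fun i => by
    simp only [cexp, pscale, Pi.add_apply, Pi.smul_apply, smul_eq_mul, ← Real.exp_add,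
      Real.rpow_def_of_pos (Real.exp_pos t), Real.log_exp]
    ring_nf

lemma clog_pscale {x : Fin N → ℝ} (hx : x ∈ PosOrth N) (u : Fin N → ℝ) {c : ℝ} (hc : 0 < c) :
    clog (pscale c u x) = clog x + Real.log c • u :=
  funext fun i => by
    simp only [clog, pscale, Pi.add_apply, Pi.smul_apply, smul_eq_mul,
      Real.log_mul (Real.rpow_pos_of_pos hc _).ne' (hx i).ne', Real.log_rpow hc]
    ring

lemma hasFDerivAt_cexp (z : Fin N → ℝ) :
    HasFDerivAt cexp (ContinuousLinearMap.pi fun i =>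
      Real.exp (z i) • ContinuousLinearMap.proj (R := ℝ) (φ := fun _ : Fin N => ℝ) i) z :=
  hasFDerivAt_pi.2 fun i => (Real.hasDerivAt_exp (z i)).comp_hasFDerivAt z (hasFDerivAt_apply i z)

lemma hasFDerivAt_clog {y : Fin N → ℝ} (hy : ∀ i, y i ≠ 0) :
    HasFDerivAt clog (ContinuousLinearMap.pi fun i =>
      (y i)⁻¹ • ContinuousLinearMap.proj (R := ℝ) (φ := fun _ : Fin N => ℝ) i) y :=
  hasFDerivAt_pi.2 fun i => (Real.hasDerivAt_log (hy i)).comp_hasFDerivAt y (hasFDerivAt_apply i y)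

lemma differentiableAt_clog {y : Fin N → ℝ} (hy : ∀ i, y i ≠ 0) : DifferentiableAt ℝ clog y :=
  (hasFDerivAt_clog hy).differentiableAt

lemma jac_eq_toMatrix' (f : (Fin N → ℝ) → (Fin N → ℝ)) (x : Fin N → ℝ) :
    Jac f x = LinearMap.toMatrix' (fderiv ℝ f x : (Fin N → ℝ) →ₗ[ℝ] (Fin N → ℝ)) := by
  ext j k
  rw [LinearMap.toMatrix'_apply]
  rfl

lemma jac_mulVec (f : (Fin N → ℝ) → (Fin N → ℝ)) (x v : Fin N → ℝ) :
    Jac f x *ᵥ v = fderiv ℝ f x v := by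
  rw [jac_eq_toMatrix', LinearMap.toMatrix'_mulVec]
  rfl

lemma jac_comp {f g : (Fin N → ℝ) → (Fin N → ℝ)} {x : Fin N → ℝ}
    (hg : DifferentiableAt ℝ g (f x)) (hf : DifferentiableAt ℝ f x) :
    Jac (g ∘ f) x = Jac g (f x) * Jac f x := by
  rw [jac_eq_toMatrix', jac_eq_toMatrix', jac_eq_toMatrix', fderiv_comp x hg hf,
    ContinuousLinearMap.toLinearMap_comp, LinearMap.toMatrix'_comp]

lemma jac_cexp (z : Fin N → ℝ) : Jac cexp z = Matrix.diagonal (cexp z) := by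
  ext j k
  simp [Jac, (hasFDerivAt_cexp z).fderiv, Matrix.diagonal_apply, Pi.single_apply, cexp]

lemma jac_clog {y : Fin N → ℝ} (hy : ∀ i, y i ≠ 0) :
    Jac clog y = Matrix.diagonal fun i => (y i)⁻¹ := by
  ext j k
  simp [Jac, (hasFDerivAt_clog hy).fderiv, Matrix.diagonal_apply, Pi.single_apply]

variable {u : Fin N → ℝ} {F : (Fin N → ℝ) → (Fin N → ℝ)} {z : Fin N → ℝ}

lemma differentiableAt_clog_comp_comp_cexp (hF : DifferentiableAt ℝ F (cexp z))
    (hFz : F (cexp z) ∈ PosOrth N) : DifferentiableAt ℝ (clog ∘ F ∘ cexp) z :=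
  (differentiableAt_clog fun i => (hFz i).ne').comp z
    (hF.comp z (hasFDerivAt_cexp z).differentiableAt)

lemma jac_clog_comp_comp_cexp (hF : DifferentiableAt ℝ F (cexp z))
    (hFz : F (cexp z) ∈ PosOrth N) (j k : Fin N) :
    Jac (clog ∘ F ∘ cexp) z j k = Real.exp (z k) / F (cexp z) j * Jac F (cexp z) j k := by
  rw [jac_comp (f := F ∘ cexp) (differentiableAt_clog fun i => (hFz i).ne')
      (hF.comp z (hasFDerivAt_cexp z).differentiableAt),
    jac_comp hF (hasFDerivAt_cexp z).differentiableAt, Function.comp_apply,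
    jac_clog fun i => (hFz i).ne', jac_cexp]
  simp only [diagonal_mul, mul_diagonal, cexp]
  ring

lemma clog_comp_comp_cexp_add_smul (hFz : F (cexp z) ∈ PosOrth N)
    (hscale : ∀ x ∈ PosOrth N, ∀ c : ℝ, 0 < c → F (pscale c u x) = pscale c u (F x)) (t : ℝ) :
    (clog ∘ F ∘ cexp) (z + t • u) = (clog ∘ F ∘ cexp) z + t • u := by
  simp only [Function.comp_apply, cexp_add_smul, hscale _ (cexp_mem_posOrth z) _ (Real.exp_pos t),
    clog_pscale hFz _ (Real.exp_pos t), Real.log_exp]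

lemma jac_clog_comp_comp_cexp_mulVec_self (hF : DifferentiableAt ℝ F (cexp z))
    (hFz : F (cexp z) ∈ PosOrth N)
    (hscale : ∀ x ∈ PosOrth N, ∀ c : ℝ, 0 < c → F (pscale c u x) = pscale c u (F x)) :
    Jac (clog ∘ F ∘ cexp) z *ᵥ u = u := by
  rw [jac_mulVec]
  exact (differentiableAt_clog_comp_comp_cexp hF hFz).hasFDerivAt.apply_eq_of_forall_add_smul
    (clog_comp_comp_cexp_add_smul hFz hscale)

lemma isIrreducible_map_abs_jac_clog_comp_comp_cexp (hF : DifferentiableAt ℝ F (cexp z))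
    (hFz : F (cexp z) ∈ PosOrth N) (hconn : MatIrred (Matrix.of fun j k => |Jac F (cexp z) j k|)) :
    ((Jac (clog ∘ F ∘ cexp) z).map abs).IsIrreducible :=
  MatIrred.isIrreducible (fun _ _ => abs_nonneg _) fun a b =>
    Relation.TransGen.mono (fun k j hkj => by
      simpa [jac_clog_comp_comp_cexp hF hFz, (div_pos (Real.exp_pos (z k)) (hFz j)).ne'] using hkj)
      _ _ (hconn a b)

lemma mul_jac_clog_comp_comp_cexp_mul_nonneg_iff (hF : DifferentiableAt ℝ F (cexp z))
    (hFz : F (cexp z) ∈ PosOrth N) (a b : ℝ) (j k : Fin N) :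
    0 ≤ a * Jac (clog ∘ F ∘ cexp) z j k * b ↔ 0 ≤ a * Jac F (cexp z) j k * b := by
  rw [jac_clog_comp_comp_cexp hF hFz, mul_left_comm a, mul_assoc,
    mul_nonneg_iff_of_pos_left (div_pos (Real.exp_pos (z k)) (hFz j))]

end LogCoordinates

section MonoConsistent

variable {N : ℕ} {F : (Fin N → ℝ) → (Fin N → ℝ)} {u : Fin N → ℝ}

lemma MonoConsistent.exists_sign (h : MonoConsistent F u) :
    ∃ σ : Fin N → ℝ, (∀ j, |σ j| = 1) ∧ (∀ j, 0 ≤ σ j * u j) ∧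
      ∀ x ∈ PosOrth N, ∀ j k, 0 ≤ σ j * Jac F x j k * σ k := by
  obtain ⟨ζ, hp, hm, hJ⟩ := h
  refine ⟨fun j => if ζ j then 1 else -1, fun j => by dsimp only; split_ifs <;> simp,
    fun j => ?_, fun x hx j k => ?_⟩
  · cases hj : ζ j <;> simp [hj, hp j, hm j]
  · have := hJ x hx j k
    cases hj : ζ j <;> cases hk : ζ k <;> simp_all

lemma decide_pos_eq_decide_pos_iff {a b : ℝ} (ha : a ≠ 0) (hb : b ≠ 0) :
    decide (0 < a) = decide (0 < b) ↔ 0 < a * b := by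
  rcases ha.lt_or_gt with ha | ha <;> rcases hb.lt_or_gt with hb | hb
  · simp [ha.not_gt, hb.not_gt, mul_pos_of_neg_of_neg ha hb]
  · simp [ha.not_gt, hb, (mul_neg_of_neg_of_pos ha hb).not_gt]
  · simp [ha, hb.not_gt, (mul_neg_of_pos_of_neg ha hb).not_gt]
  · simp [ha, hb, mul_pos ha hb]

lemma monoConsistent_of_mul_mul_nonneg (hu : ∀ j, u j ≠ 0)
    (h : ∀ x ∈ PosOrth N, ∀ j k, 0 ≤ u j * Jac F x j k * u k) : MonoConsistent F u := by
  refine ⟨fun j => decide (0 < u j), fun j hj => (of_decide_eq_true hj).le,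
    fun j hj => le_of_not_gt (of_decide_eq_false hj),
    fun x hx j k => ⟨fun hjk => ?_, fun hjk => ?_⟩⟩
  all_goals
    have hxjk : 0 ≤ (u j * u k) * Jac F x j k := by linarith [h x hx j k]
    simp only [ne_eq, decide_pos_eq_decide_pos_iff (hu j) (hu k)] at hjk
  · exact (mul_nonneg_iff_of_pos_left hjk).1 hxjk
  · exact nonpos_of_mul_nonneg_right hxjk
      (lt_of_le_of_ne (not_lt.1 hjk) (mul_ne_zero (hu j) (hu k)))

end MonoConsistent

theorem signs_vs_spectral_radius_general
    {N : ℕ} (u : Fin N → ℝ) (hu : u ≠ 0)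
    (F : (Fin N → ℝ) → (Fin N → ℝ))
    (hmap : ∀ x ∈ PosOrth N, F x ∈ PosOrth N)
    (hC1 : ContDiffOn ℝ 1 F (PosOrth N))
    (hscale : ∀ x ∈ PosOrth N, ∀ c : ℝ, 0 < c → F (pscale c u x) = pscale c u (F x))
    (hconn : ∀ x ∈ PosOrth N, MatIrred (Matrix.of fun j k => |Jac F x j k|))
    (G : (Fin N → ℝ) → (Fin N → ℝ)) (hG : G = clog ∘ F ∘ cexp) :
    ([∀ z : Fin N → ℝ, specRad (Matrix.of fun j k => |Jac G z j k|) = 1,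
      ∀ z : Fin N → ℝ,
        (Matrix.of fun j k => |Jac G z j k|).mulVec (fun i => |u i|) = (fun i => |u i|),
      ∀ z : Fin N → ℝ, ∃ v : Fin N → ℝ, v ≠ 0 ∧ (∀ i, 0 ≤ v i) ∧
        (Matrix.of fun j k => |Jac G z j k|).mulVec v = v,
      MonoConsistent F u].TFAE) ∧
    (MonoConsistent F u → ∀ j, u j ≠ 0) := by
  subst hG
  have hFz : ∀ z, F (cexp z) ∈ PosOrth N := fun z => hmap _ (cexp_mem_posOrth z)
  have hF : ∀ z, DifferentiableAt ℝ F (cexp z) := fun z =>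
    (hC1.differentiableOn one_ne_zero).differentiableAt
      ((isOpen_posOrth N).mem_nhds (cexp_mem_posOrth z))
  have hJu z := jac_clog_comp_comp_cexp_mulVec_self (hF z) (hFz z) hscale
  have hirr z := isIrreducible_map_abs_jac_clog_comp_comp_cexp (hF z) (hFz z)
    (hconn _ (cexp_mem_posOrth z))
  have hsign z := mul_jac_clog_comp_comp_cexp_mul_nonneg_iff (hF z) (hFz z)
  have habsu : (fun i => |u i|) ≠ 0 := fun h => hu (funext fun i => abs_eq_zero.1 (congrFun h i))
  have h42 : MonoConsistent F u → ∀ z,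
      (Jac (clog ∘ F ∘ cexp) z).map abs *ᵥ (fun i => |u i|) = fun i => |u i| := fun h z => by
    obtain ⟨σ, hσ, hσu, hσJ⟩ := h.exists_sign
    exact map_abs_mulVec_abs_eq_of_sign (hJu z) hσ hσu fun j k =>
      (hsign z _ _ j k).2 (hσJ _ (cexp_mem_posOrth z) j k)
  have hu0 : (∀ z, (Jac (clog ∘ F ∘ cexp) z).map abs *ᵥ (fun i => |u i|) = fun i => |u i|) →
      ∀ j, u j ≠ 0 := fun h j =>
    abs_pos.1 <| (hirr 0).pos_of_mulVec_le_self (fun i => abs_nonneg (u i)) habsu (h 0).le j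
  refine ⟨?_, fun h => hu0 (h42 h)⟩
  tfae_have 1 → 2 := fun h z => (hirr z).mulVec_eq_self_of_le_mulVec (h z).le
    (fun i => abs_nonneg (u i)) fun i => by
      simpa only [hJu z] using abs_mulVec_le (Jac (clog ∘ F ∘ cexp) z) u i
  tfae_have 2 → 3 := fun h z => ⟨_, habsu, fun i => abs_nonneg (u i), h z⟩
  tfae_have 3 → 1 := fun h z => by
    obtain ⟨v, hv0, hv, hAv⟩ := h z
    exact (hirr z).specRad_eq_one hv hv0 hAv
  tfae_have 2 → 4 := fun h => monoConsistent_of_mul_mul_nonneg (hu0 h) fun x hx j k => by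
    simpa [cexp_clog hx] using (hsign (clog x) _ _ j k).1
      (mul_mul_nonneg_of_map_abs_mulVec_abs_eq (hJu (clog x)) (h (clog x)) j k)
  tfae_have 4 → 2 := h42
  tfae_finish

/-- **Monotonicity vs. spectral radius.** Let `u ≠ 0`, let `F : ℝ^N_{++} → ℝ^N_{++}` be
continuously differentiable, scale with exponent `u` and connect all variables, and let
`G := clog ∘ F ∘ cexp`. Then the following are equivalent:
(i) for each `z`, `|DG(z)|` has spectral radius `1`;
(ii) for each `z`, `|DG(z)| |u| = |u|`;
(iii) for each `z`, there is a nonzero nonnegative `v` with `|DG(z)| v = v`;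
(iv) the monotonicity behavior of `F` is consistent with `u`.
Moreover, if one (hence all) of these holds, every entry of `u` is nonzero. -/
theorem signs_vs_spectral_radius
    {N : ℕ} (hN : 1 ≤ N) (u : Fin N → ℝ) (hu : u ≠ 0)
    (F : (Fin N → ℝ) → (Fin N → ℝ))
    (hmap : ∀ x ∈ PosOrth N, F x ∈ PosOrth N)
    (hC1 : ContDiffOn ℝ 1 F (PosOrth N))
    (hscale : ∀ x ∈ PosOrth N, ∀ c : ℝ, 0 < c → F (pscale c u x) = pscale c u (F x))
    (hconn : ∀ x ∈ PosOrth N, MatIrred (Matrix.of fun j k => |Jac F x j k|))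
    (G : (Fin N → ℝ) → (Fin N → ℝ)) (hG : G = clog ∘ F ∘ cexp) :
    ([∀ z : Fin N → ℝ, specRad (Matrix.of fun j k => |Jac G z j k|) = 1,
      ∀ z : Fin N → ℝ,
        (Matrix.of fun j k => |Jac G z j k|).mulVec (fun i => |u i|) = (fun i => |u i|),
      ∀ z : Fin N → ℝ, ∃ v : Fin N → ℝ, v ≠ 0 ∧ (∀ i, 0 ≤ v i) ∧
        (Matrix.of fun j k => |Jac G z j k|).mulVec v = v,
      MonoConsistent F u].TFAE) ∧
    (MonoConsistent F u → ∀ j, u j ≠ 0) :=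
  signs_vs_spectral_radius_general u hu F hmap hC1 hscale hconn G hG
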